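/- The map π ↦ π' on G_{r,n} defined by: for 1 ≤ i ≤ n−1, if π(i) = j^[β] then π'(n−i) = (n+1−j)^[r−β mod r], and if π(n) = j^[β] then π'(n) = (n+1−j)^[r−1−β mod r], is a bijection of G_{r,n} satisfying exc(π') = rn − 1 − exc(π). -/

import Mathlib

open Finset Polynomial

/-- The group of colored permutations `G_{r,n} = Z_r ≀ S_n`, realized as bijections of the
colored alphabet `Σ = [n] × {0,…,r-1}` commuting with the color shift. -/
def ColoredPerm (r n : ℕ) [NeZero r] : Type :=
  {π : Equiv.Perm (Fin n × Fin r) //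
    ∀ x : Fin n × Fin r, π (x.1, x.2 + 1) = ((π x).1, (π x).2 + 1)}

/-- The color order on the colored alphabet:
`1^[r-1] < ⋯ < n^[r-1] < ⋯ < 1^[0] < ⋯ < n^[0]` (higher color is smaller). -/
def colorLt {r n : ℕ} (x y : Fin n × Fin r) : Prop :=
  y.2 < x.2 ∨ (x.2 = y.2 ∧ x.1 < y.1)

/-- The excedance number `exc` of a colored permutation. -/
noncomputable def cExc {r n : ℕ} [NeZero r] (π : ColoredPerm r n) : ℕ :=
  Nat.card {x : Fin n × Fin r // colorLt x (π.1 x)}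

/-- `exc_A(π) = |{i ∈ [n-1] : π(i) > i}|` (positions are the color-0 letters,
and `i ∈ [n-1]` corresponds to `i.val + 1 < n`). -/
noncomputable def cExcA {r n : ℕ} [NeZero r] (π : ColoredPerm r n) : ℕ :=
  Nat.card {i : Fin n // i.val + 1 < n ∧ colorLt (i, 0) (π.1 (i, 0))}

/-- `csum(π)`: the sum of the colors appearing in the window notation of `π`. -/
def csum {r n : ℕ} [NeZero r] (π : ColoredPerm r n) : ℕ :=
  ∑ i : Fin n, (π.1 (i, 0)).2.val

/-!
In window notation `π (i^[c]) = σ(i)^[β(i) + c]`, so the number of colours `c` for which `i^[c]`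
is an excedance is `β(i)` when `β(i) ≠ 0` (the `c` for which `β(i) + c` wraps around), and `r` or
`0` according as `i < σ(i)` or not when `β(i) = 0`.
The complement map is an involution pairing position `i < n` with `n - 1 - i` and fixing `n`;
it reverses letters and negates colours, so the counts at paired positions add up to `r`,
while at the last position (never an excedance position for colour `0`) they add up to `r - 1`
because `-β - 1 = r - 1 - β`. Summing over positions gives `exc π + exc π' = r n - 1`.
-/

namespace Fin

lemma card_add_lt_self {r : ℕ} (β : Fin r) : #{c : Fin r | β + c < c} = β.val := by
  simp_rw [add_comm β, add_lt_left_iff, filter_lt_eq_Ioi, card_Ioi, val_rev]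
  omega

lemma neg_sub_one_eq_rev {r : ℕ} [NeZero r] (β : Fin r) : -β - 1 = β.rev := by
  obtain ⟨r, rfl⟩ := Nat.exists_eq_succ_of_ne_zero (NeZero.ne r)
  rw [← last_sub, ← neg_neg (last r), neg_last]
  abel

variable {m : ℕ}

def revInit (m : ℕ) (p : Fin (m + 1)) : Fin (m + 1) := (p + 1).rev

lemma revInit_involutive : Function.Involutive (revInit m) := by
  intro p
  simp only [revInit, ← last_sub]
  abel

@[simp] lemma revInit_last : revInit m (last m) = last m := by
  simp [revInit]

lemma revInit_castSucc (i : Fin m) : revInit m i.castSucc = i.rev.castSucc := by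
  rw [revInit, coeSucc_eq_succ, rev_succ]

lemma revInit_eq_last_iff {p : Fin (m + 1)} : revInit m p = last m ↔ p = last m := by
  rw [revInit_involutive.eq_iff, revInit_last]

end Fin

namespace ColoredPerm

variable {r n m : ℕ} [NeZero r]

def letter (π : ColoredPerm r n) (i : Fin n) : Fin n := (π.1 (i, 0)).1

def color (π : ColoredPerm r n) (i : Fin n) : Fin r := (π.1 (i, 0)).2

open Fin.NatCast in
lemma apply_eq (π : ColoredPerm r n) (x : Fin n × Fin r) :
    π.1 x = (π.letter x.1, π.color x.1 + x.2) := by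
  obtain ⟨i, c⟩ := x
  rw [← Fin.cast_val_eq_self c]
  induction c.val with
  | zero => simp [letter, color]
  | succ k ih =>
    have step : π.1 (i, k + 1) = ((π.1 (i, k)).1, (π.1 (i, k)).2 + 1) := π.2 (i, k)
    rw [Nat.cast_succ, step, ih, add_assoc]

lemma letter_injective (π : ColoredPerm r n) : Function.Injective π.letter := by
  intro i j h
  have : π.1 (i, 0) = π.1 (j, π.color i - π.color j) := by
    rw [apply_eq, apply_eq, h, add_sub_cancel, add_zero]
  exact congrArg Prod.fst (π.1.injective this)

@[ext]
lemma ext {π ρ : ColoredPerm r n} (hl : ∀ i, π.letter i = ρ.letter i)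
    (hc : ∀ i, π.color i = ρ.color i) : π = ρ :=
  Subtype.ext <| Equiv.ext fun x => by rw [apply_eq, apply_eq, hl, hc]

noncomputable def letterPerm (π : ColoredPerm r n) : Equiv.Perm (Fin n) :=
  Equiv.ofBijective π.letter π.letter_injective.bijective_of_finite

def ofWindow (σ : Equiv.Perm (Fin n)) (β : Fin n → Fin r) : ColoredPerm r n :=
  ⟨Equiv.prodShear σ fun i => Equiv.addLeft (β i), fun x => by simp [add_assoc]⟩

@[simp] lemma letter_ofWindow (σ : Equiv.Perm (Fin n)) (β : Fin n → Fin r) :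
    (ofWindow σ β).letter = σ := rfl

@[simp] lemma color_ofWindow (σ : Equiv.Perm (Fin n)) (β : Fin n → Fin r) :
    (ofWindow σ β).color = β := by
  funext i
  simp [color, ofWindow]

instance : DecidableRel (colorLt : Fin n × Fin r → Fin n × Fin r → Prop) :=
  fun _ _ => inferInstanceAs (Decidable (_ ∨ _))

lemma card_colorLt_shift (i j : Fin n) (β : Fin r) :
    #{c : Fin r | colorLt (i, c) (j, β + c)} = β.val + if β = 0 ∧ i < j then r else 0 := by
  by_cases hβ : β = 0
  · subst hβ
    simp only [colorLt, zero_add, lt_self_iff_false, true_and, false_or, filter_const]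
    split_ifs <;> simp
  · have : ∀ c : Fin r, colorLt (i, c) (j, β + c) ↔ β + c < c := by
      simp [colorLt, hβ]
    simp_rw [this, Fin.card_add_lt_self, hβ, false_and, if_false, add_zero]

def posExc (π : ColoredPerm r n) (i : Fin n) : ℕ :=
  #{c : Fin r | colorLt (i, c) (π.1 (i, c))}

lemma cExc_eq_sum_posExc (π : ColoredPerm r n) : cExc π = ∑ i, π.posExc i := by
  rw [cExc, Nat.card_eq_fintype_card, Fintype.card_subtype, card_filter, Fintype.sum_prod_type]
  simp only [posExc, card_filter]

lemma posExc_eq (π : ColoredPerm r n) (i : Fin n) :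
    π.posExc i = (π.color i).val + if π.color i = 0 ∧ i < π.letter i then r else 0 := by
  simp_rw [posExc, apply_eq]
  exact card_colorLt_shift _ _ _

noncomputable def complement (π : ColoredPerm r (m + 1)) : ColoredPerm r (m + 1) :=
  ofWindow (Fin.revPerm * π.letterPerm * Fin.revInit_involutive.toPerm)
    fun p => -π.color (Fin.revInit m p) - if p = Fin.last m then 1 else 0

@[simp] lemma letter_complement (π : ColoredPerm r (m + 1)) (p : Fin (m + 1)) :
    π.complement.letter p = (π.letter (Fin.revInit m p)).rev := rfl

@[simp] lemma color_complement (π : ColoredPerm r (m + 1)) (p : Fin (m + 1)) :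
    π.complement.color p = -π.color (Fin.revInit m p) - if p = Fin.last m then 1 else 0 := by
  simp [complement]

lemma complement_involutive : Function.Involutive (complement (r := r) (m := m)) := by
  intro π
  ext p
  · simp [Fin.revInit_involutive p]
  · simp [Fin.revInit_involutive p, Fin.revInit_eq_last_iff]

lemma posExc_last_add_posExc_complement_last (π : ColoredPerm r (m + 1)) :
    π.posExc (Fin.last m) + π.complement.posExc (Fin.last m) = r - 1 := by
  simp only [posExc_eq, color_complement, Fin.revInit_last, if_true, Fin.neg_sub_one_eq_rev,
    Fin.val_rev, not_lt.2 (Fin.le_last _), and_false, if_false, add_zero]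
  have := (π.color (Fin.last m)).isLt
  omega

lemma posExc_castSucc_add_posExc_complement (π : ColoredPerm r (m + 1)) (i : Fin m) :
    π.posExc i.castSucc + π.complement.posExc (Fin.revInit m i.castSucc) = r := by
  have hlt : Fin.revInit m i.castSucc < (π.letter i.castSucc).rev ↔
      ¬ i.castSucc < π.letter i.castSucc := by
    rw [Fin.revInit_castSucc, Fin.lt_def, Fin.lt_def]
    simp only [Fin.val_castSucc, Fin.val_rev]
    omega
  simp only [posExc_eq, color_complement, letter_complement, Fin.revInit_involutive _,
    Fin.revInit_eq_last_iff, Fin.castSucc_ne_last, if_false, sub_zero, neg_eq_zero, hlt,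
    Fin.val_neg]
  by_cases h0 : π.color i.castSucc = 0
  · by_cases hi : i.castSucc < π.letter i.castSucc <;> simp [h0, hi]
  · have := (π.color i.castSucc).isLt
    simp only [h0, false_and, if_false, add_zero]
    omega

lemma cExc_add_cExc_complement (π : ColoredPerm r (m + 1)) :
    cExc π + cExc π.complement = r * (m + 1) - 1 := by
  have reindex : ∑ p, π.complement.posExc p = ∑ p, π.complement.posExc (Fin.revInit m p) :=
    (Equiv.sum_comp Fin.revInit_involutive.toPerm _).symm
  rw [cExc_eq_sum_posExc, cExc_eq_sum_posExc, reindex, ← sum_add_distrib, Fin.sum_univ_castSucc]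
  simp only [posExc_castSucc_add_posExc_complement, Fin.revInit_last,
    posExc_last_add_posExc_complement_last, sum_const, card_univ, Fintype.card_fin, smul_eq_mul]
  have := NeZero.pos r
  rw [mul_comm m r, Nat.mul_succ]
  omega

end ColoredPerm

/-- Positions and letters are `0`-indexed via `Fin n`: the position `i ∈ [n−1]` is `i` with
`i.val + 1 < n`, `n − i` and `n + 1 − j` are `Fin.rev`, and in `Fin r` the colours
`r − β mod r` and `r − 1 − β mod r` are `−β` and `−β − 1`. -/
theorem exc_complement_bijection (r n : ℕ) [NeZero r] (hn : 1 ≤ n) :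
    ∃ Φ : ColoredPerm r n ≃ ColoredPerm r n,
      (∀ π : ColoredPerm r n,
        (∀ i : Fin n, ∀ h : i.val + 1 < n,
          (Φ π).1 ((⟨i.val + 1, h⟩ : Fin n).rev, 0) =
            ((π.1 (i, 0)).1.rev, -(π.1 (i, 0)).2)) ∧
        (Φ π).1 ((⟨n - 1, by omega⟩ : Fin n), 0) =
          ((π.1 ((⟨n - 1, by omega⟩ : Fin n), 0)).1.rev,
            -(π.1 ((⟨n - 1, by omega⟩ : Fin n), 0)).2 - 1)) ∧
      ∀ π : ColoredPerm r n, cExc (Φ π) = r * n - 1 - cExc π := by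
  obtain ⟨m, rfl⟩ : ∃ m, n = m + 1 := ⟨n - 1, by omega⟩
  refine ⟨ColoredPerm.complement_involutive.toPerm _, fun π => ⟨fun i h => ?_, ?_⟩, fun π => ?_⟩
  · have hi : i < Fin.last m := Fin.lt_def.2 (by rw [Fin.val_last]; omega)
    have hpos : (⟨i.val + 1, h⟩ : Fin (m + 1)).rev = Fin.revInit m i := by
      have hsucc : i + 1 = ⟨i.val + 1, h⟩ := Fin.ext (Fin.val_add_one_of_lt hi)
      rw [Fin.revInit, hsucc]
    show _ = ((π.letter i).rev, -π.color i)
    simp [hpos, ColoredPerm.apply_eq, Fin.revInit_involutive i, Fin.revInit_eq_last_iff, hi.ne]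
  · show π.complement.1 (Fin.last m, 0) = ((π.letter (Fin.last m)).rev, -π.color (Fin.last m) - 1)
    simp [ColoredPerm.apply_eq]
  · have := ColoredPerm.cExc_add_cExc_complement π
    simp only [Function.Involutive.coe_toPerm]
    omega
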